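/- Under the Setup: there do not exist indices 1 ≤ j < i ≤ t−1 such that v_i ∈ e_1, v_j ∈ e_1, v_{i−1} ∈ e_t, and (e_i ∖ U) ∩ (e_j ∖ U) ≠ ∅. -/

import Mathlib

/-!
A vertex `w ∉ U` lying in both `e_i` and `e_j` closes the longest path into a Berge cycle
through all `t` edges, using `v_1, v_j ∈ e_1` and `v_{i-1}, v_{t-1} ∈ e_t`:

  `w –e_j– v_{j-1} –e_{j-1}– ⋯ –e_2– v_1 –e_1– v_j –e_{j+1}– ⋯ –e_{i-1}– v_{i-1}`
  `  –e_t– v_{t-1} –e_{t-1}– ⋯ –e_{i+1}– v_i –e_i– w`.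
-/

namespace BergeM

def MIsBergePath {n : ℕ} (E : Multiset (Finset (Fin n))) (k : ℕ)
    (v : Fin (k + 1) → Fin n) (f : Fin k → Finset (Fin n)) : Prop :=
  Function.Injective v ∧ (↑(List.ofFn f) : Multiset (Finset (Fin n))) ≤ E ∧
    ∀ i : Fin k, v i.castSucc ∈ f i ∧ v i.succ ∈ f i

def MHasBergePath {n : ℕ} (E : Multiset (Finset (Fin n))) (k : ℕ) : Prop :=
  ∃ v f, MIsBergePath E k v f

def MBPFree {n : ℕ} (E : Multiset (Finset (Fin n))) (k : ℕ) : Prop :=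
  ¬ MHasBergePath E k

def MConnected {n : ℕ} (E : Multiset (Finset (Fin n))) : Prop :=
  ∀ x y : Fin n, ∃ (k : ℕ) (v : Fin (k + 1) → Fin n) (f : Fin k → Finset (Fin n)),
    MIsBergePath E k v f ∧ (∃ i, v i = x) ∧ (∃ i, v i = y)

def MUniform {n : ℕ} (E : Multiset (Finset (Fin n))) (r : ℕ) : Prop :=
  ∀ e ∈ E, e.card = r

def MIsBergeCycle {n : ℕ} (E : Multiset (Finset (Fin n))) (k : ℕ)
    (v : Fin k → Fin n) (f : Fin k → Finset (Fin n)) : Prop :=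
  Function.Injective v ∧ (↑(List.ofFn f) : Multiset (Finset (Fin n))) ≤ E ∧
    ∀ i : Fin k, v i ∈ f i ∧ v ⟨(i.val + 1) % k, Nat.mod_lt _ i.pos⟩ ∈ f i

def MHasBergeCycle {n : ℕ} (E : Multiset (Finset (Fin n))) (k : ℕ) : Prop :=
  ∃ v f, MIsBergeCycle E k v f

def edgeNbhd {n : ℕ} (E : Multiset (Finset (Fin n))) (S : Finset (Fin n)) :
    Multiset (Finset (Fin n)) :=
  E.filter fun e => (e ∩ S).Nonempty

open Set

theorem _root_.List.ofFn_perm_map_range_succ {t : ℕ} {τ : ℕ → ℕ} (hinj : InjOn τ (Iio t))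
    (hmaps : MapsTo τ (Iio t) (Icc 1 t)) :
    (List.ofFn fun m : Fin t => τ m).Perm ((List.range t).map (· + 1)) := by
  have hsub : (List.ofFn fun m : Fin t => τ m) ⊆ (List.range t).map (· + 1) := by
    intro x hx
    obtain ⟨m, rfl⟩ := List.mem_ofFn.1 hx
    obtain ⟨h1, h2⟩ := hmaps m.2
    exact List.mem_map.2 ⟨τ m - 1, List.mem_range.2 (by omega), by omega⟩
  refine (List.Nodup.subperm ?_ hsub).perm_of_length_le (by simp)
  exact List.nodup_ofFn.2 fun a b hab => Fin.ext (hinj a.2 b.2 hab)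

theorem mHasBergeCycle_of_closedWalk {n t : ℕ} {E : Multiset (Finset (Fin n))}
    (x : ℕ → Fin n) (f : ℕ → Finset (Fin n)) (hx : InjOn x (Iio t)) (hclose : x t = x 0)
    (hf : (↑(List.ofFn fun m : Fin t => f m) : Multiset (Finset (Fin n))) ≤ E)
    (hlink : ∀ m < t, x m ∈ f m ∧ x (m + 1) ∈ f m) : MHasBergeCycle E t := by
  refine ⟨fun m => x m, fun m => f m, fun a b hab => Fin.ext (hx a.2 b.2 hab), hf, fun m => ?_⟩
  have hnext : x ((m + 1) % t) = x (m + 1) := by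
    rcases Nat.lt_or_ge (m + 1) t with h | h
    · rw [Nat.mod_eq_of_lt h]
    · rw [show (m : ℕ) + 1 = t by omega, Nat.mod_self, hclose]
  simpa only [hnext] using hlink m m.2

theorem _root_.Set.InjOn.update_zero {α : Type*} {v : ℕ → α} {s : Set ℕ} {w : α}
    (hv : InjOn v s) (h0 : 0 ∉ s) (hw : w ∉ v '' s) :
    InjOn (Function.update v 0 w) (insert 0 s) := by
  have hs : EqOn (Function.update v 0 w) v s := fun x hx =>
    Function.update_of_ne (ne_of_mem_of_not_mem hx h0) _ _
  rw [injOn_insert h0, hs.image_eq, Function.update_self]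
  exact ⟨hv.congr hs.symm, hw⟩

/-- The cycle `w, v_{j-1}, …, v_1, v_j, …, v_{i-1}, v_{t-1}, …, v_i` (and back to `w`):
position `m` carries the vertex `v_(cycleVertexIdx j i t m)`, where index `0` stands for `w`,
and `e_(cycleEdgeIdx j i t m)` joins positions `m` and `m + 1`. -/
def cycleVertexIdx (j i t m : ℕ) : ℕ :=
  if m = 0 then 0 else if t ≤ m then 0
  else if m < j then j - m else if m < i then m else t - 1 + i - m

def cycleEdgeIdx (j i t m : ℕ) : ℕ :=
  if m = 0 then j else if m + 1 < j then j - m else if m + 1 = j then 1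
  else if m + 1 < i then m + 1 else if m + 1 = i then t
  else if m + 1 < t then t - 1 + i - m else i

/-- The incidences `v_a ∈ e_c` (again with `v_0 = w`) available when closing the cycle. -/
def Incident (j i t a c : ℕ) : Prop :=
  a = 0 ∧ (c = j ∨ c = i) ∨ 1 ≤ a ∧ a < t ∧ c ≤ t ∧ (c = a ∨ c = a + 1) ∨
    a = j ∧ c = 1 ∨ a = i - 1 ∧ c = t

section CycleIndices

variable {j i t : ℕ}

theorem cycleVertexIdx_injOn (hji : j < i) : InjOn (cycleVertexIdx j i t) (Iio t) := by
  intro a ha b hb h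
  simp only [mem_Iio] at ha hb
  unfold cycleVertexIdx at h
  split_ifs at h <;> omega

theorem cycleVertexIdx_mapsTo (hji : j < i) (hit : i < t) :
    MapsTo (cycleVertexIdx j i t) (Iio t) (insert 0 (Icc 1 (t - 1))) := by
  intro m hm
  simp only [mem_Iio] at hm
  simp only [mem_insert_iff, mem_Icc, cycleVertexIdx]
  split_ifs <;> omega

theorem cycleEdgeIdx_injOn (hji : j < i) : InjOn (cycleEdgeIdx j i t) (Iio t) := by
  intro a ha b hb h
  simp only [mem_Iio] at ha hb
  unfold cycleEdgeIdx at h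
  split_ifs at h <;> omega

theorem cycleEdgeIdx_mapsTo (hj : 1 ≤ j) (hji : j < i) (hit : i < t) :
    MapsTo (cycleEdgeIdx j i t) (Iio t) (Icc 1 t) := by
  intro m hm
  simp only [mem_Iio] at hm
  simp only [mem_Icc, cycleEdgeIdx]
  split_ifs <;> omega

theorem incident_cycleIdx (hj : 1 ≤ j) (hji : j < i) (hit : i < t) {m : ℕ} (hm : m < t) :
    Incident j i t (cycleVertexIdx j i t m) (cycleEdgeIdx j i t m) ∧
      Incident j i t (cycleVertexIdx j i t (m + 1)) (cycleEdgeIdx j i t m) := by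
  unfold Incident cycleVertexIdx cycleEdgeIdx
  constructor <;> split_ifs <;> first | contradiction | omega

end CycleIndices

theorem mem_edge_of_path {n t : ℕ} {e : ℕ → Finset (Fin n)} {v : ℕ → Fin n}
    (hv1 : v 1 ∈ e 1) (hvt : v (t - 1) ∈ e t)
    (hvmid : ∀ i : ℕ, 2 ≤ i → i ≤ t - 1 → v (i - 1) ∈ e i ∧ v i ∈ e i)
    {p q : ℕ} (hp : 1 ≤ p) (hpt : p < t) (hqt : q ≤ t) (hpq : q = p ∨ q = p + 1) :
    v p ∈ e q := by
  rcases hpq with rfl | rfl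
  · rcases Nat.lt_or_ge q 2 with hq | hq
    · obtain rfl : q = 1 := by omega
      exact hv1
    · exact (hvmid q hq (by omega)).2
  · rcases Nat.lt_or_ge (p + 1) t with hq | hq
    · simpa using (hvmid (p + 1) (by omega) (by omega)).1
    · obtain rfl : p = t - 1 := by omega
      rwa [Nat.sub_add_cancel (by omega)]

theorem mem_of_incident {n t i j : ℕ} {e : ℕ → Finset (Fin n)} {v : ℕ → Fin n} {w : Fin n}
    (hv1 : v 1 ∈ e 1) (hvt : v (t - 1) ∈ e t)
    (hvmid : ∀ i : ℕ, 2 ≤ i → i ≤ t - 1 → v (i - 1) ∈ e i ∧ v i ∈ e i)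
    (hj : 1 ≤ j) (hji : j < i) (hwj : w ∈ e j) (hwi : w ∈ e i) (hvj1 : v j ∈ e 1)
    (hvit : v (i - 1) ∈ e t) {a c : ℕ} (h : Incident j i t a c) :
    Function.update v 0 w a ∈ e c := by
  rcases h with ⟨rfl, rfl | rfl⟩ | ⟨hp, hpt, hqt, hpq⟩ | ⟨rfl, rfl⟩ | ⟨rfl, rfl⟩
  · rwa [Function.update_self]
  · rwa [Function.update_self]
  · rw [Function.update_of_ne (by omega)]
    exact mem_edge_of_path hv1 hvt hvmid hp hpt hqt hpq
  · rwa [Function.update_of_ne (by omega)]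
  · rwa [Function.update_of_ne (by omega)]

theorem stmt17 (n t : ℕ) (E : Multiset (Finset (Fin n))) (hcyc : ¬ MHasBergeCycle E t)
    (e : ℕ → Finset (Fin n)) (v : ℕ → Fin n)
    (he : (↑((List.range t).map fun i => e (i + 1)) : Multiset (Finset (Fin n))) ≤ E)
    (hvinj : Set.InjOn v (Set.Icc 1 (t - 1)))
    (hv1 : v 1 ∈ e 1) (hvt : v (t - 1) ∈ e t)
    (hvmid : ∀ i : ℕ, 2 ≤ i → i ≤ t - 1 → v (i - 1) ∈ e i ∧ v i ∈ e i) :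
    ¬ ∃ i j : ℕ, 1 ≤ j ∧ j < i ∧ i ≤ t - 1 ∧ v i ∈ e 1 ∧ v j ∈ e 1 ∧
      v (i - 1) ∈ e t ∧
      ((e i \ (Finset.Icc 1 (t - 1)).image v) ∩
        (e j \ (Finset.Icc 1 (t - 1)).image v)).Nonempty := by
  rintro ⟨i, j, hj, hji, hit, -, hvj1, hvit, w, hw⟩
  simp only [Finset.mem_inter, Finset.mem_sdiff] at hw
  obtain ⟨⟨hwi, hwU⟩, hwj, -⟩ := hw
  replace hit : i < t := by omega
  have hu : InjOn (Function.update v 0 w) (insert 0 (Icc 1 (t - 1))) :=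
    hvinj.update_zero (by simp) (by simpa [← Finset.coe_image] using hwU)
  have hedges := (List.ofFn_perm_map_range_succ (cycleEdgeIdx_injOn hji)
    (cycleEdgeIdx_mapsTo hj hji hit)).map e
  rw [List.map_ofFn, List.map_map] at hedges
  refine hcyc (mHasBergeCycle_of_closedWalk (Function.update v 0 w ∘ cycleVertexIdx j i t)
    (e ∘ cycleEdgeIdx j i t)
    (hu.comp (cycleVertexIdx_injOn hji) (cycleVertexIdx_mapsTo hji hit))
    (by simp [cycleVertexIdx]) ((Multiset.coe_eq_coe.2 hedges).trans_le he) fun m hm => ?_)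
  obtain ⟨hcur, hnext⟩ := incident_cycleIdx hj hji hit hm
  exact ⟨mem_of_incident hv1 hvt hvmid hj hji hwj hwi hvj1 hvit hcur,
    mem_of_incident hv1 hvt hvmid hj hji hwj hwi hvj1 hvit hnext⟩

end BergeM
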